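/- Fix α > 0. Define E(t) = √(2/π) · ∫₀ᵗ (1/√y) · ∫_{(t−y)/α}^∞ exp(−z²/(2y)) dz dy for t > 0. Then E is differentiable on (0,∞) and E′(t) = 2·exp(2t/α²)·(1 − Φ(2√t/α)), where Φ is the standard normal CDF. -/

import Mathlib

/-!
Write `Q` for the Gaussian tail `x ↦ ∫_x^∞ e^{-z²/2} dz` and `u(t, y) = (t - y) / (α √y)`.
Scaling `z ↦ √y z` turns the inner integral into `√y Q(u(t, y))`, so
`E(t) = √(2/π) ∫₀ᵗ Q(u(t, y)) dy`. Leibniz' rule gives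
`E'(t) / √(2/π) = Q(0) - ∫₀ᵗ e^{-u(t,y)²/2} / (α √y) dy`, and this integrand has the explicit
primitive `y ↦ Q(u(t, y)) - e^{2t/α²} Q((t + y) / (α √y))`, which vanishes as `y → 0⁺`.
Evaluating it at `y = t` leaves `E'(t) = √(2/π) e^{2t/α²} Q(2√t/α)`, and `Q = √(2π) (1 - Φ)`.
-/

open MeasureTheory Real

/-- The standard normal cumulative distribution function. -/
noncomputable def gaussCDF (x : ℝ) : ℝ :=
  (Real.sqrt (2 * Real.pi))⁻¹ * ∫ z in Set.Iic x, Real.exp (-z ^ 2 / 2)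

open Set Filter Topology Asymptotics

noncomputable def gaussTail (x : ℝ) : ℝ := ∫ z in Ioi x, exp (-z ^ 2 / 2)

lemma integrable_exp_neg_sq_div_two : Integrable fun z : ℝ => exp (-z ^ 2 / 2) := by
  simpa [neg_div, div_eq_inv_mul] using integrable_exp_neg_mul_sq (b := 2⁻¹) (by norm_num)

lemma integral_exp_neg_sq_div_two : ∫ z, exp (-z ^ 2 / 2) = √(2 * π) := by
  simpa [neg_div, div_eq_inv_mul] using integral_gaussian 2⁻¹

lemma gaussTail_sub_gaussTail (x y : ℝ) :
    gaussTail x - gaussTail y = ∫ z in x..y, exp (-z ^ 2 / 2) :=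
  intervalIntegral.integral_Ioi_sub_Ioi' integrable_exp_neg_sq_div_two.integrableOn
    integrable_exp_neg_sq_div_two.integrableOn

lemma hasDerivAt_gaussTail (x : ℝ) : HasDerivAt gaussTail (-exp (-x ^ 2 / 2)) x := by
  have h : gaussTail = fun u => gaussTail 0 - ∫ z in (0 : ℝ)..u, exp (-z ^ 2 / 2) := by
    ext u
    rw [← gaussTail_sub_gaussTail, sub_sub_cancel]
  rw [h]
  exact (intervalIntegral.integral_hasDerivAt_right
    integrable_exp_neg_sq_div_two.intervalIntegrable
    (Continuous.stronglyMeasurableAtFilter (by fun_prop) _ _)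
    (by fun_prop)).const_sub _

lemma continuous_gaussTail : Continuous gaussTail :=
  continuous_iff_continuousAt.2 fun x => (hasDerivAt_gaussTail x).continuousAt

lemma tendsto_gaussTail_atTop : Tendsto gaussTail atTop (𝓝 0) := by
  have h := (intervalIntegral_tendsto_integral_Ioi 0
    integrable_exp_neg_sq_div_two.integrableOn tendsto_id).const_sub (gaussTail 0)
  rw [show gaussTail 0 - ∫ z in Ioi 0, exp (-z ^ 2 / 2) = 0 from sub_self _] at h
  exact h.congr fun x => by rw [← gaussTail_sub_gaussTail, sub_sub_cancel, id]

lemma abs_gaussTail_sub_le (x y : ℝ) : |gaussTail x - gaussTail y| ≤ |x - y| := by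
  rw [gaussTail_sub_gaussTail, abs_sub_comm x, ← Real.norm_eq_abs, ← one_mul |y - x|]
  refine intervalIntegral.norm_integral_le_of_norm_le_const fun z _ => ?_
  rw [Real.norm_of_nonneg (exp_pos _).le, exp_le_one_iff]
  nlinarith [sq_nonneg z]

lemma abs_gaussTail_le (x : ℝ) : |gaussTail x| ≤ √(2 * π) := by
  rw [← integral_exp_neg_sq_div_two, gaussTail, abs_of_nonneg
    (setIntegral_nonneg measurableSet_Ioi fun z _ => (exp_pos _).le)]
  exact setIntegral_le_integral integrable_exp_neg_sq_div_two
    (Eventually.of_forall fun z => (exp_pos _).le)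

lemma one_sub_gaussCDF (x : ℝ) : 1 - gaussCDF x = (√(2 * π))⁻¹ * gaussTail x := by
  have h := intervalIntegral.integral_Iic_add_Ioi (b := x)
    integrable_exp_neg_sq_div_two.integrableOn integrable_exp_neg_sq_div_two.integrableOn
  rw [integral_exp_neg_sq_div_two] at h
  rw [gaussCDF, gaussTail, eq_sub_of_add_eq' h, mul_sub, inv_mul_cancel₀ (by positivity)]

lemma integral_Ioi_exp_neg_sq_div {y : ℝ} (hy : 0 < y) (c : ℝ) :
    ∫ z in Ioi c, exp (-z ^ 2 / (2 * y)) = √y * gaussTail (c / √y) := by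
  have hs : 0 < √y := sqrt_pos.2 hy
  have h : ∀ z, exp (-z ^ 2 / (2 * y)) = exp (-((√y)⁻¹ * z) ^ 2 / 2) := fun z => by
    rw [mul_pow, inv_pow, sq_sqrt hy.le]
    field_simp
  simp_rw [h]
  rw [integral_comp_mul_left_Ioi (fun z => exp (-z ^ 2 / 2)) c (inv_pos.2 hs), smul_eq_mul,
    inv_inv, gaussTail, inv_mul_eq_div]

lemma intervalIntegrable_inv_mul_sqrt (α : ℝ) {T : ℝ} (hT : 0 ≤ T) :
    IntervalIntegrable (fun y => (α * √y)⁻¹) volume 0 T := by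
  refine ((intervalIntegral.intervalIntegrable_rpow' (r := -(1 / 2)) (by norm_num)).const_mul
    α⁻¹).congr fun y hy => ?_
  rw [uIoc_of_le hT] at hy
  rw [mul_inv, rpow_neg hy.1.le, sqrt_eq_rpow]

lemma norm_exp_neg_sq_div_le {α : ℝ} (hα : 0 < α) (u y : ℝ) :
    ‖exp (-u ^ 2 / 2) / (α * √y)‖ ≤ (α * √y)⁻¹ := by
  rw [norm_div, norm_of_nonneg (by positivity : 0 ≤ α * √y), div_eq_mul_inv]
  refine mul_le_of_le_one_left (by positivity) ?_
  rw [norm_of_nonneg (exp_pos _).le, exp_le_one_iff]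
  exact div_nonpos_of_nonpos_of_nonneg (neg_nonpos.2 (sq_nonneg u)) zero_le_two

lemma tendsto_div_mul_sqrt_atTop {α c : ℝ} (hα : 0 < α) (hc : 0 < c) {f : ℝ → ℝ}
    (hf : Tendsto f (𝓝[>] 0) (𝓝 c)) :
    Tendsto (fun y => f y / (α * √y)) (𝓝[>] 0) atTop := by
  have hden : Tendsto (fun y => α * √y) (𝓝[>] 0) (𝓝[>] 0) := by
    refine tendsto_nhdsWithin_of_tendsto_nhds_of_eventually_within _ ?_ ?_
    · exact ((by fun_prop : Continuous fun y => α * √y).tendsto' 0 0 (by simp)).mono_left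
        nhdsWithin_le_nhds
    · filter_upwards [self_mem_nhdsWithin] with y hy using mul_pos hα (sqrt_pos.2 hy)
  exact hf.pos_mul_atTop hc (tendsto_inv_nhdsGT_zero.comp hden)

section Primitive

variable {α t : ℝ}

noncomputable def tailPrimitive (α t y : ℝ) : ℝ :=
  gaussTail ((t - y) / (α * √y)) - exp (2 * t / α ^ 2) * gaussTail ((t + y) / (α * √y))

lemma hasDerivAt_tailPrimitive (hα : α ≠ 0) {y : ℝ} (hy : 0 < y) :
    HasDerivAt (tailPrimitive α t) (exp (-((t - y) / (α * √y)) ^ 2 / 2) / (α * √y)) y := by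
  have hsq : √y ^ 2 = y := sq_sqrt hy.le
  have hden : HasDerivAt (fun y => α * √y) (α * (1 / (2 * √y))) y :=
    (hasDerivAt_sqrt hy.ne').const_mul α
  have hu₁ := ((hasDerivAt_id y).const_sub t).div hden (by positivity)
  have hu₂ := ((hasDerivAt_id y).const_add t).div hden (by positivity)
  have hG₁ := (hasDerivAt_gaussTail ((t - y) / (α * √y))).comp y hu₁
  have hG₂ := ((hasDerivAt_gaussTail ((t + y) / (α * √y))).comp y hu₂).const_mul
    (exp (2 * t / α ^ 2))
  refine (hG₁.sub hG₂).congr_deriv ?_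
  -- the two Gaussian factors agree, since `((t + y)² - (t - y)²) / (2 α² y) = 2 t / α²`
  have hexp : exp (2 * t / α ^ 2) * exp (-((t + y) / (α * √y)) ^ 2 / 2)
      = exp (-((t - y) / (α * √y)) ^ 2 / 2) := by
    rw [← exp_add]
    congr 1
    field_simp
    rw [hsq]
    ring
  have hG₂_eq : ∀ X, exp (2 * t / α ^ 2) * (-exp (-((t + y) / (α * √y)) ^ 2 / 2) * X)
      = -exp (-((t - y) / (α * √y)) ^ 2 / 2) * X := fun X => by rw [← hexp]; ring
  simp only [id, hG₂_eq]
  field_simp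
  rw [hsq]
  ring

lemma tendsto_tailPrimitive_zero (hα : 0 < α) (ht : 0 < t) :
    Tendsto (tailPrimitive α t) (𝓝[>] 0) (𝓝 0) := by
  have hlim : ∀ c : ℝ, Tendsto (fun y => gaussTail ((t + c * y) / (α * √y))) (𝓝[>] 0) (𝓝 0) :=
    fun c => tendsto_gaussTail_atTop.comp <| tendsto_div_mul_sqrt_atTop hα ht <|
      (Continuous.tendsto' (by fun_prop) 0 t (by simp)).mono_left nhdsWithin_le_nhds
  have h := (hlim (-1)).sub ((hlim 1).const_mul (exp (2 * t / α ^ 2)))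
  simp only [neg_one_mul, one_mul, ← sub_eq_add_neg, mul_zero, sub_zero] at h
  exact h

lemma integral_exp_div_mul_sqrt (hα : 0 < α) (ht : 0 < t) :
    ∫ y in 0..t, exp (-((t - y) / (α * √y)) ^ 2 / 2) / (α * √y)
      = gaussTail 0 - exp (2 * t / α ^ 2) * gaussTail (2 * √t / α) := by
  have hint : IntervalIntegrable (fun y => exp (-((t - y) / (α * √y)) ^ 2 / 2) / (α * √y))
      volume 0 t :=
    (intervalIntegrable_inv_mul_sqrt α ht.le).mono_fun'
      (by fun_prop : Measurable _).aestronglyMeasurable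
      (ae_of_all _ fun y => norm_exp_neg_sq_div_le hα _ y)
  rw [intervalIntegral.integral_eq_sub_of_hasDerivAt_of_tendsto ht
    (fun y hy => hasDerivAt_tailPrimitive hα.ne' hy.1) hint (tendsto_tailPrimitive_zero hα ht)
    ((hasDerivAt_tailPrimitive hα.ne' ht).continuousAt.tendsto.mono_left nhdsWithin_le_nhds),
    sub_zero, tailPrimitive, sub_self, zero_div, ← two_mul]
  congr 3
  rw [mul_comm α, ← div_div, mul_div_assoc, div_sqrt]

end Primitive

lemma intervalIntegrable_gaussTail_comp {g : ℝ → ℝ} (hg : Measurable g) (a b : ℝ) :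
    IntervalIntegrable (fun y => gaussTail (g y)) volume a b :=
  (intervalIntegrable_const (c := √(2 * π))).mono_fun
    (continuous_gaussTail.measurable.comp hg).aestronglyMeasurable
    (ae_of_all _ fun y => by simpa [abs_of_nonneg (sqrt_nonneg _)] using abs_gaussTail_le (g y))

theorem hasDerivAt_integral_self_of_norm_sub_le {E : Type*} [NormedAddCommGroup E]
    [NormedSpace ℝ E] [CompleteSpace E] {F : ℝ → ℝ → E} {U : Set ℝ} {t₀ L : ℝ}
    (hU : IsOpen U) [U.OrdConnected] (ht₀ : t₀ ∈ U) (hF : ∀ t ∈ U, ContinuousOn (F t) U)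
    (hL : ∀ t ∈ U, ∀ y ∈ U, ‖F t y - F t₀ y‖ ≤ L * |t - t₀|) :
    HasDerivAt (fun t => ∫ y in t₀..t, F t y) (F t₀ t₀) t₀ := by
  have hint : ∀ s ∈ U, ∀ t ∈ U, IntervalIntegrable (F s) volume t₀ t := fun s hs t ht =>
    ((hF s hs).mono (Set.OrdConnected.uIcc_subset ‹_› ht₀ ht)).intervalIntegrable
  have hfrozen : HasDerivAt (fun t => ∫ y in t₀..t, F t₀ y) (F t₀ t₀) t₀ :=
    intervalIntegral.integral_hasDerivAt_right .refl
      ((hF t₀ ht₀).stronglyMeasurableAtFilter hU t₀ ht₀)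
      ((hF t₀ ht₀).continuousAt (hU.mem_nhds ht₀))
  -- the error of freezing the parameter is `O((t - t₀)²)`
  have herror : HasDerivAt (fun t => (∫ y in t₀..t, F t y) - ∫ y in t₀..t, F t₀ y) 0 t₀ := by
    rw [hasDerivAt_iff_isLittleO]
    simp only [intervalIntegral.integral_same, sub_zero, smul_zero]
    refine IsBigO.trans_isLittleO (IsBigO.of_bound L ?_) (isLittleO_pow_sub_sub t₀ one_lt_two)
    filter_upwards [hU.mem_nhds ht₀] with t ht
    rw [← intervalIntegral.integral_sub (hint t ht t ht) (hint t₀ ht₀ t ht)]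
    refine (intervalIntegral.norm_integral_le_of_norm_le_const fun y hy =>
      hL t ht y (Set.OrdConnected.uIoc_subset ‹_› ht₀ ht hy)).trans_eq ?_
    simp [sq, mul_assoc]
  rw [← add_zero (F t₀ t₀)]
  exact (hfrozen.add herror).congr_of_eventuallyEq (Eventually.of_forall fun t => by simp)

section Occupation

variable {α : ℝ}

lemma hasDerivAt_integral_gaussTail_const_domain (hα : 0 < α) {T : ℝ} (hT : 0 ≤ T) (t : ℝ) :
    HasDerivAt (fun s => ∫ y in 0..T, gaussTail ((s - y) / (α * √y)))
      (-∫ y in 0..T, exp (-((t - y) / (α * √y)) ^ 2 / 2) / (α * √y)) t := by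
  have hderiv : ∀ s y, HasDerivAt (fun s => gaussTail ((s - y) / (α * √y)))
      (-(exp (-((s - y) / (α * √y)) ^ 2 / 2) / (α * √y))) s := fun s y => by
    simpa only [Function.comp_def, id, neg_mul, mul_one_div, neg_div] using
      (hasDerivAt_gaussTail _).comp s (((hasDerivAt_id s).sub_const y).div_const (α * √y))
  rw [← intervalIntegral.integral_neg]
  exact (intervalIntegral.hasDerivAt_integral_of_dominated_loc_of_deriv_le (s := univ)
    univ_mem (Eventually.of_forall fun s => (continuous_gaussTail.measurable.comp
      (by fun_prop)).aestronglyMeasurable)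
    (intervalIntegrable_gaussTail_comp (by fun_prop) 0 T)
    (by fun_prop : Measurable _).aestronglyMeasurable
    (ae_of_all _ fun y _ s _ => by rw [norm_neg]; exact norm_exp_neg_sq_div_le hα _ y)
    (intervalIntegrable_inv_mul_sqrt α hT) (ae_of_all _ fun y _ s _ => hderiv s y)).2

lemma hasDerivAt_integral_gaussTail {t : ℝ} (hα : 0 < α) (ht : 0 < t) :
    HasDerivAt (fun s => ∫ y in 0..s, gaussTail ((s - y) / (α * √y)))
      (exp (2 * t / α ^ 2) * gaussTail (2 * √t / α)) t := by
  set G : ℝ → ℝ → ℝ := fun s y => gaussTail ((s - y) / (α * √y))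
  have hsplit : (fun s => ∫ y in 0..s, G s y)
      = fun s => (∫ y in 0..t, G s y) + ∫ y in t..s, G s y :=
    funext fun s => (intervalIntegral.integral_add_adjacent_intervals
      (intervalIntegrable_gaussTail_comp (by fun_prop) _ _)
      (intervalIntegrable_gaussTail_comp (by fun_prop) _ _)).symm
  have hU : t ∈ Ioi (t / 2) := half_lt_self ht
  have hcont : ∀ s ∈ Ioi (t / 2), ContinuousOn (G s) (Ioi (t / 2)) := fun s _ =>
    continuous_gaussTail.comp_continuousOn <| ContinuousOn.div (by fun_prop) (by fun_prop)
      fun y hy => (mul_pos hα (sqrt_pos.2 ((half_pos ht).trans hy))).ne'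
  have hlip : ∀ s ∈ Ioi (t / 2), ∀ y ∈ Ioi (t / 2),
      ‖G s y - G t y‖ ≤ (α * √(t / 2))⁻¹ * |s - t| := fun s _ y hy => by
    have hαy : 0 < α * √y := mul_pos hα (sqrt_pos.2 ((half_pos ht).trans hy))
    calc ‖G s y - G t y‖ ≤ |(s - y) / (α * √y) - (t - y) / (α * √y)| := abs_gaussTail_sub_le _ _
      _ = (α * √y)⁻¹ * |s - t| := by
        rw [← sub_div, sub_sub_sub_cancel_right, abs_div, abs_of_pos hαy, div_eq_inv_mul]
      _ ≤ (α * √(t / 2))⁻¹ * |s - t| := by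
        gcongr
        exact le_of_lt hy
  have hmoving : HasDerivAt (fun s => ∫ y in t..s, G s y) (gaussTail 0) t := by
    simpa [G] using hasDerivAt_integral_self_of_norm_sub_le isOpen_Ioi hU hcont hlip
  rw [hsplit]
  refine ((hasDerivAt_integral_gaussTail_const_domain hα ht.le t).add hmoving).congr_deriv ?_
  rw [integral_exp_div_mul_sqrt hα ht]
  ring

end Occupation

/-- For `α > 0`, the expected occupation time
`E t = √(2/π) ∫₀ᵗ (1/√y) ∫_{(t-y)/α}^∞ e^{-z²/(2y)} dz dy` is differentiable on `(0,∞)`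
with `E′(t) = 2 exp(2t/α²) (1 - Φ(2√t/α))`. -/
theorem stmt8 (α : ℝ) (hα : 0 < α) (E : ℝ → ℝ)
    (hE : ∀ t : ℝ, E t = Real.sqrt (2 / Real.pi)
      * ∫ y in Set.Ioo (0:ℝ) t,
          (1 / Real.sqrt y) * ∫ z in Set.Ioi ((t - y) / α), Real.exp (-z ^ 2 / (2 * y))) :
    ∀ t : ℝ, 0 < t →
      HasDerivAt E (2 * Real.exp (2 * t / α ^ 2) * (1 - gaussCDF (2 * Real.sqrt t / α))) t := by
  intro t ht
  have hE_eq : ∀ s, 0 < s → E s = √(2 / π) * ∫ y in 0..s, gaussTail ((s - y) / (α * √y)) :=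
    fun s hs => by
      rw [hE s, intervalIntegral.integral_of_le hs.le, integral_Ioc_eq_integral_Ioo]
      congr 1
      refine setIntegral_congr_fun measurableSet_Ioo fun y hy => ?_
      rw [integral_Ioi_exp_neg_sq_div hy.1, one_div, inv_mul_cancel_left₀ (sqrt_pos.2 hy.1).ne',
        div_div]
  have hconst : √(2 / π) = 2 * (√(2 * π))⁻¹ := by
    rw [eq_mul_inv_iff_mul_eq₀ (by positivity), ← sqrt_mul (by positivity),
      show 2 / π * (2 * π) = 2 ^ 2 by field_simp, sqrt_sq zero_le_two]
  refine (((hasDerivAt_integral_gaussTail hα ht).const_mul √(2 / π)).congr_of_eventuallyEq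
    (eventually_gt_nhds ht |>.mono hE_eq)).congr_deriv ?_
  rw [one_sub_gaussCDF, hconst]
  ring
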